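/- Let F₁, F₂, F₃ be closed sets covering T². If two vertical lines l_x and l_{x+γ} with 1/3 ≤ γ ≤ 1/2 each meet exactly the same two sets F_p, F_q (and not the third), then one of the covering sets has diameter at least √(γ² + 1/4) ≥ √13/6. -/

import Mathlib

/-!
On the circle `l_x`, covered by the closed sets `F_p` and `F_q` alone, connectedness gives a
point `(x, y)` lying in both. The point `(x + γ, y + 1/2)` of `l_{x+γ}` lies in `F_p` or `F_q`,
and its flat distance to `(x, y)` is `√(γ² + 1/4)`.
-/

open scoped Real Pointwise

/-- The Euclidean (flat) distance on the torus `T² = ℝ²/ℤ²`. -/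
noncomputable def torusDist (u v : AddCircle (1:ℝ) × AddCircle (1:ℝ)) : ℝ :=
  Real.sqrt (‖u.1 - v.1‖ ^ 2 + ‖u.2 - v.2‖ ^ 2)

/-- The diameter of a subset of the flat torus. -/
noncomputable def torusDiam (F : Set (AddCircle (1:ℝ) × AddCircle (1:ℝ))) : ℝ :=
  sSup {d | ∃ u ∈ F, ∃ v ∈ F, d = torusDist u v}

/-- `d_m(T²)`: infimum of the maximal diameter over coverings of `T²` by `m` sets. -/
noncomputable def dTor (m : ℕ) : ℝ :=
  sInf {τ | ∃ F : Fin m → Set (AddCircle (1:ℝ) × AddCircle (1:ℝ)),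
    (⋃ i, F i) = Set.univ ∧ ∀ i, torusDiam (F i) ≤ τ}

/-- The vertical line (circle) `l_x = {x} × T¹` on the flat torus. -/
def vline (x : ℝ) : Set (AddCircle (1:ℝ) × AddCircle (1:ℝ)) :=
  {p | p.1 = (x : AddCircle (1:ℝ))}

lemma AddCircle.norm_coe_one_of_abs_le {t : ℝ} (ht : |t| ≤ 1 / 2) :
    ‖(t : AddCircle (1:ℝ))‖ = |t| :=
  (AddCircle.norm_coe_eq_abs_iff 1 one_ne_zero).mpr (by simpa using ht)

lemma torusDist_le_one (u v : AddCircle (1:ℝ) × AddCircle (1:ℝ)) : torusDist u v ≤ 1 := by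
  have half (a : AddCircle (1:ℝ)) : ‖a‖ ≤ 1 / 2 := by
    simpa using AddCircle.norm_le_half_period 1 (x := a) one_ne_zero
  rw [torusDist, Real.sqrt_le_one]
  nlinarith [half (u.1 - v.1), half (u.2 - v.2),
    norm_nonneg (u.1 - v.1), norm_nonneg (u.2 - v.2)]

lemma torusDist_le_torusDiam {F : Set (AddCircle (1:ℝ) × AddCircle (1:ℝ))}
    {u v : AddCircle (1:ℝ) × AddCircle (1:ℝ)} (hu : u ∈ F) (hv : v ∈ F) :
    torusDist u v ≤ torusDiam F :=
  le_csSup ⟨1, fun _ ⟨a, _, b, _, hd⟩ => hd ▸ torusDist_le_one a b⟩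
    ⟨u, hu, v, hv, rfl⟩

lemma torusDist_coe_add_half {x γ : ℝ} (hγ : |γ| ≤ 1 / 2) (y : AddCircle (1:ℝ)) :
    torusDist ((x : AddCircle (1:ℝ)), y)
        (((x + γ : ℝ) : AddCircle (1:ℝ)), y + ((1 / 2 : ℝ) : AddCircle (1:ℝ))) =
      Real.sqrt (γ ^ 2 + 1 / 4) := by
  have h₁ : ‖(x : AddCircle (1:ℝ)) - ((x + γ : ℝ) : AddCircle (1:ℝ))‖ = |γ| := by
    rw [← AddCircle.coe_sub, sub_add_cancel_left,
      AddCircle.norm_coe_one_of_abs_le (by rwa [abs_neg]), abs_neg]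
  have h₂ : ‖y - (y + ((1 / 2 : ℝ) : AddCircle (1:ℝ)))‖ = 1 / 2 := by
    rw [sub_add_cancel_left, norm_neg, AddCircle.norm_coe_one_of_abs_le (by norm_num)]
    norm_num
  rw [torusDist, h₁, h₂, sq_abs]
  norm_num

lemma isPreconnected_vline (x : ℝ) : IsPreconnected (vline x) := by
  have : vline x = {(x : AddCircle (1:ℝ))} ×ˢ Set.univ := by ext; simp [vline]
  rw [this]
  exact isPreconnected_singleton.prod isPreconnected_univ

lemma vline_subset_union {ι : Type*} {F : ι → Set (AddCircle (1:ℝ) × AddCircle (1:ℝ))}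
    (hcover : (⋃ i, F i) = Set.univ) {p q : ι} {x : ℝ}
    (hx : ∀ r, r ≠ p → r ≠ q → vline x ∩ F r = ∅) : vline x ⊆ F p ∪ F q := by
  intro u hu
  obtain ⟨r, hr⟩ := Set.mem_iUnion.mp (hcover ▸ Set.mem_univ u)
  by_cases hrp : r = p
  · exact Or.inl (hrp ▸ hr)
  by_cases hrq : r = q
  · exact Or.inr (hrq ▸ hr)
  exact absurd (hx r hrp hrq) (Set.nonempty_iff_ne_empty.mp ⟨u, hu, hr⟩)

theorem torus_two_bichromatic_lines (F : Fin 3 → Set (AddCircle (1:ℝ) × AddCircle (1:ℝ)))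
    (hclosed : ∀ i, IsClosed (F i))
    (hcover : (⋃ i, F i) = Set.univ)
    (p q : Fin 3)
    (x γ : ℝ) (hγ₁ : 1/3 ≤ γ) (hγ₂ : γ ≤ 1/2)
    (hxp : (vline x ∩ F p).Nonempty) (hxq : (vline x ∩ F q).Nonempty)
    (hx : ∀ r, r ≠ p → r ≠ q → vline x ∩ F r = ∅)
    (hy : ∀ r, r ≠ p → r ≠ q → vline (x + γ) ∩ F r = ∅) :
    ∃ i, Real.sqrt (γ^2 + 1/4) ≤ torusDiam (F i) := by
  obtain ⟨⟨_, y⟩, rfl, hyp, hyq⟩ := isPreconnected_closed_iff.mp (isPreconnected_vline x)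
    (F p) (F q) (hclosed p) (hclosed q) (vline_subset_union hcover hx) hxp hxq
  have hdist := torusDist_coe_add_half (x := x) (abs_le.mpr ⟨by linarith, hγ₂⟩) y
  have hv : (_, y + ((1 / 2 : ℝ) : AddCircle (1:ℝ))) ∈ vline (x + γ) := rfl
  rcases vline_subset_union hcover hy hv with hvp | hvq
  · exact ⟨p, hdist ▸ torusDist_le_torusDiam hyp hvp⟩
  · exact ⟨q, hdist ▸ torusDist_le_torusDiam hyq hvq⟩
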